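/- Define the differential operator W_j := ⟨ζ⟩^{-1}(hD_{z_j} − ζ_j) + (1/2)⟨ζ⟩^{-3} ζ_j (hD_z − ζ)² − i h D_{ζ_j} − (n/2) h ⟨ζ⟩^{-2} ζ_j acting in the variables (z,ζ) ∈ ℂⁿ×ℂⁿ (with D = (1/i)∂ and (hD_z − ζ)² = ∑_k(hD_{z_k} − ζ_k)²). Then for every y ∈ ℝⁿ, W_j annihilates the function (z,ζ) ↦ exp((i/h)(⟨z − y, ζ⟩ + (i/2)⟨ζ⟩(z−y)²)). -/

import Mathlib

/-!
Write the exponential as `f = exp (i φ / h)`. As `∂_{z_m} φ = ζ_m + i⟨ζ⟩(z_m − y_m)`, the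
operator `hD_{z_m} − ζ_m` acts on `f` as multiplication by `i⟨ζ⟩(z_m − y_m)`; applying it once
more (Leibniz rule) and summing over `m` gives `(hD_z − ζ)² f = (n h ⟨ζ⟩ − ⟨ζ⟩² (z − y)²) f`.
Likewise `−ihD_{ζ_j} f = −∂_{ζ_j} φ · f`, where `∂_{ζ_j}⟨ζ⟩ = ζ_j/⟨ζ⟩`. Substituting into
`W_j f`, the terms cancel in pairs. Off the branch cut of the square root `⟨ζ⟩` is holomorphic,
which is what makes these computations valid.
-/

open Complex

noncomputable section

/-- The FBI exponential `exp((i/h)(⟨z−y,ζ⟩ + (i/2)⟨ζ⟩(z−y)²))` as a function of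
`(z,ζ) ∈ ℂⁿ×ℂⁿ`, for a fixed real `y`. -/
def fbiExp (n : ℕ) (h : ℝ) (y : Fin n → ℝ)
    (p : (Fin n → ℂ) × (Fin n → ℂ)) : ℂ :=
  Complex.exp ((Complex.I / (h : ℂ)) *
    ((∑ k, (p.1 k - (y k : ℂ)) * p.2 k) +
      (Complex.I / 2) * ((1 + ∑ k, (p.2 k) ^ 2) ^ ((1 : ℂ) / 2)) *
        ∑ k, (p.1 k - (y k : ℂ)) ^ 2))

/-- The operator
`W_j = ⟨ζ⟩^{-1}(hD_{z_j} − ζ_j) + (1/2)⟨ζ⟩^{-3}ζ_j(hD_z − ζ)² − ihD_{ζ_j} − (n/2)h⟨ζ⟩^{-2}ζ_j`. -/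
def Wop (n : ℕ) (h : ℝ) (j : Fin n)
    (f : (Fin n → ℂ) × (Fin n → ℂ) → ℂ)
    (p : (Fin n → ℂ) × (Fin n → ℂ)) : ℂ :=
  let br : ℂ := (1 + ∑ k, (p.2 k) ^ 2) ^ ((1 : ℂ) / 2)
  br⁻¹ * (((h : ℂ) / Complex.I) * fderiv ℂ f p (Pi.single j 1, 0) - p.2 j * f p) +
  (1 / 2) * (br ^ 3)⁻¹ * p.2 j *
    (∑ k, (((h : ℂ) / Complex.I) *
        fderiv ℂ (fun q : (Fin n → ℂ) × (Fin n → ℂ) =>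
          ((h : ℂ) / Complex.I) * fderiv ℂ f q (Pi.single k 1, 0) - q.2 k * f q)
          p (Pi.single k 1, 0) -
      p.2 k * (((h : ℂ) / Complex.I) * fderiv ℂ f p (Pi.single k 1, 0) - p.2 k * f p))) -
  Complex.I * (((h : ℂ) / Complex.I) * fderiv ℂ f p (0, Pi.single j 1)) -
  ((n : ℂ) / 2) * (h : ℂ) * (br ^ 2)⁻¹ * p.2 j * f p

theorem fderiv_cexp_const_mul_apply {E : Type*} [NormedAddCommGroup E] [NormedSpace ℂ E]
    {g : E → ℂ} {x : E} (hg : DifferentiableAt ℂ g x) (c : ℂ) (v : E) :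
    fderiv ℂ (fun x => exp (c * g x)) x v = c * fderiv ℂ g x v * exp (c * g x) := by
  rw [(hg.hasFDerivAt.const_mul c).cexp.fderiv]
  simp only [smul_apply, smul_eq_mul]
  ring

section

open ContinuousLinearMap Filter Topology

variable {n : ℕ}

local notation "ℂ²ⁿ" => (Fin n → ℂ) × (Fin n → ℂ)
local notation "dz[" k "]" => ContinuousLinearMap.comp
  (proj k : (Fin n → ℂ) →L[ℂ] ℂ) (fst ℂ (Fin n → ℂ) (Fin n → ℂ))
local notation "dζ[" k "]" => ContinuousLinearMap.comp
  (proj k : (Fin n → ℂ) →L[ℂ] ℂ) (snd ℂ (Fin n → ℂ) (Fin n → ℂ))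

def japaneseBracket (ζ : Fin n → ℂ) : ℂ := (1 + ∑ k, ζ k ^ 2) ^ ((1 : ℂ) / 2)

theorem japaneseBracket_ne_zero {ζ : Fin n → ℂ} (hζ : 1 + ∑ k, ζ k ^ 2 ∈ slitPlane) :
    japaneseBracket ζ ≠ 0 := by
  rw [japaneseBracket, Ne, cpow_eq_zero_iff]
  exact fun h => slitPlane_ne_zero hζ h.1

theorem hasFDerivAt_japaneseBracket {ζ : Fin n → ℂ} (hζ : 1 + ∑ k, ζ k ^ 2 ∈ slitPlane) :
    HasFDerivAt japaneseBracket
      ((japaneseBracket ζ)⁻¹ • ∑ k, ζ k • (proj k : (Fin n → ℂ) →L[ℂ] ℂ)) ζ := by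
  have hs : HasFDerivAt (fun ζ : Fin n → ℂ => 1 + ∑ k, ζ k ^ 2)
      (∑ k, (2 * ζ k) • (proj k : (Fin n → ℂ) →L[ℂ] ℂ)) ζ := by
    refine (HasFDerivAt.fun_sum fun k _ => ?_).const_add 1
    exact ((proj k : (Fin n → ℂ) →L[ℂ] ℂ).hasFDerivAt.pow 2).congr_fderiv (by simp)
  refine ((hasStrictDerivAt_cpow_const hζ).hasDerivAt.comp_hasFDerivAt ζ hs).congr_fderiv ?_
  have hhalf : (1 : ℂ) / 2 - 1 = -(1 / 2) := by norm_num
  rw [hhalf, cpow_neg, ← japaneseBracket, Finset.smul_sum, Finset.smul_sum]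
  refine Finset.sum_congr rfl fun k _ => ?_
  rw [smul_smul, smul_smul]
  congr 1
  ring

def fbiPhase (y : Fin n → ℝ) (q : ℂ²ⁿ) : ℂ :=
  ∑ k, (q.1 k - y k) * q.2 k + I / 2 * japaneseBracket q.2 * ∑ k, (q.1 k - y k) ^ 2

theorem fbiExp_eq_cexp_fbiPhase (h : ℝ) (y : Fin n → ℝ) :
    fbiExp n h y = fun q => exp (I / h * fbiPhase y q) := rfl

theorem hasFDerivAt_fbiPhase (y : Fin n → ℝ) {q : ℂ²ⁿ} (hq : 1 + ∑ k, q.2 k ^ 2 ∈ slitPlane) :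
    HasFDerivAt (fbiPhase y)
      (∑ k, ((q.2 k + I * japaneseBracket q.2 * (q.1 k - y k)) • dz[k] +
        (q.1 k - y k + I / 2 * (q.2 k / japaneseBracket q.2) * ∑ l, (q.1 l - y l) ^ 2) • dζ[k]))
      q := by
  have hz : ∀ k, HasFDerivAt (fun q : ℂ²ⁿ => q.1 k - y k) (dz[k]) q :=
    fun k => (dz[k]).hasFDerivAt.sub_const _
  have hζ : ∀ k, HasFDerivAt (fun q : ℂ²ⁿ => q.2 k) (dζ[k]) q := fun k => (dζ[k]).hasFDerivAt
  have hB := (hasFDerivAt_japaneseBracket hq).comp q (hasFDerivAt_snd (p := q))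
  have hlin := HasFDerivAt.fun_sum (u := Finset.univ) fun k _ => (hz k).fun_mul (hζ k)
  have hquad := HasFDerivAt.fun_sum (u := Finset.univ) fun k _ => (hz k).pow 2
  refine (hlin.add ((hB.const_mul (I / 2)).fun_mul hquad)).congr_fderiv ?_
  set Q := ∑ l, (q.1 l - (y l : ℂ)) ^ 2
  ext v
  all_goals
    simp only [Function.comp_apply, Nat.add_one_sub_one, pow_one, nsmul_eq_mul, Nat.cast_ofNat,
      smul_comp, add_comp, add_apply, comp_apply, inl_apply, inr_apply, sum_apply, smul_apply,
      coe_fst', coe_snd', proj_apply, Pi.zero_apply, smul_eq_mul, mul_zero, zero_add, add_zero,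
      Finset.sum_const_zero]
    simp only [Finset.mul_sum, ← Finset.sum_add_distrib]
    exact Finset.sum_congr rfl fun k _ => by ring

theorem differentiableAt_fbiExp (h : ℝ) (y : Fin n → ℝ) {q : ℂ²ⁿ}
    (hq : 1 + ∑ k, q.2 k ^ 2 ∈ slitPlane) : DifferentiableAt ℂ (fbiExp n h y) q :=
  ((hasFDerivAt_fbiPhase y hq).differentiableAt.const_mul _).cexp

theorem fderiv_fbiExp_z (h : ℝ) (y : Fin n → ℝ) {q : ℂ²ⁿ}
    (hq : 1 + ∑ k, q.2 k ^ 2 ∈ slitPlane) (m : Fin n) :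
    fderiv ℂ (fbiExp n h y) q (Pi.single m 1, 0) =
      I / h * (q.2 m + I * japaneseBracket q.2 * (q.1 m - y m)) * fbiExp n h y q := by
  rw [fbiExp_eq_cexp_fbiPhase,
    fderiv_cexp_const_mul_apply (hasFDerivAt_fbiPhase y hq).differentiableAt,
    (hasFDerivAt_fbiPhase y hq).fderiv]
  simp [Pi.single_apply]

theorem fderiv_fbiExp_zeta (h : ℝ) (y : Fin n → ℝ) {q : ℂ²ⁿ}
    (hq : 1 + ∑ k, q.2 k ^ 2 ∈ slitPlane) (m : Fin n) :
    fderiv ℂ (fbiExp n h y) q (0, Pi.single m 1) =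
      I / h * (q.1 m - y m + I / 2 * (q.2 m / japaneseBracket q.2) * ∑ k, (q.1 k - y k) ^ 2) *
        fbiExp n h y q := by
  rw [fbiExp_eq_cexp_fbiPhase,
    fderiv_cexp_const_mul_apply (hasFDerivAt_fbiPhase y hq).differentiableAt,
    (hasFDerivAt_fbiPhase y hq).fderiv]
  simp [Pi.single_apply]

/-- `hD_{z_m} − ζ_m`, with `D = (1/i)∂`. -/
def hDzSubZeta (h : ℝ) (m : Fin n) (g : ℂ²ⁿ → ℂ) (q : ℂ²ⁿ) : ℂ :=
  h / I * fderiv ℂ g q (Pi.single m 1, 0) - q.2 m * g q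

theorem Wop_eq (h : ℝ) (j : Fin n) (f : ℂ²ⁿ → ℂ) (p : ℂ²ⁿ) :
    Wop n h j f p =
      (japaneseBracket p.2)⁻¹ * hDzSubZeta h j f p +
        1 / 2 * (japaneseBracket p.2 ^ 3)⁻¹ * p.2 j * ∑ k, hDzSubZeta h k (hDzSubZeta h k f) p -
        I * (h / I * fderiv ℂ f p (0, Pi.single j 1)) -
        n / 2 * h * (japaneseBracket p.2 ^ 2)⁻¹ * p.2 j * f p :=
  rfl

theorem hDzSubZeta_congr {h : ℝ} {m : Fin n} {g g' : ℂ²ⁿ → ℂ} {q : ℂ²ⁿ} (hg : g =ᶠ[𝓝 q] g') :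
    hDzSubZeta h m g q = hDzSubZeta h m g' q := by
  rw [hDzSubZeta, hDzSubZeta, hg.fderiv_eq, hg.eq_of_nhds]

theorem hDzSubZeta_mul (h : ℝ) (m : Fin n) {a g : ℂ²ⁿ → ℂ} {q : ℂ²ⁿ}
    (ha : DifferentiableAt ℂ a q) (hg : DifferentiableAt ℂ g q) :
    hDzSubZeta h m (fun q => a q * g q) q =
      h / I * fderiv ℂ a q (Pi.single m 1, 0) * g q + a q * hDzSubZeta h m g q := by
  rw [hDzSubZeta, hDzSubZeta, fderiv_fun_mul ha hg]
  simp only [add_apply, smul_apply, smul_eq_mul]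
  ring

theorem hDzSubZeta_fbiExp {h : ℝ} (hh : h ≠ 0) (y : Fin n → ℝ) (m : Fin n)
    {q : ℂ²ⁿ} (hq : 1 + ∑ k, q.2 k ^ 2 ∈ slitPlane) :
    hDzSubZeta h m (fbiExp n h y) q =
      I * japaneseBracket q.2 * (q.1 m - y m) * fbiExp n h y q := by
  have hh' : (h : ℂ) ≠ 0 := ofReal_ne_zero.mpr hh
  rw [hDzSubZeta, fderiv_fbiExp_z h y hq]
  field_simp
  ring

theorem hasFDerivAt_I_mul_japaneseBracket_mul_sub (y : Fin n → ℝ) (m : Fin n) {q : ℂ²ⁿ}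
    (hq : 1 + ∑ k, q.2 k ^ 2 ∈ slitPlane) :
    HasFDerivAt (fun q : ℂ²ⁿ => I * japaneseBracket q.2 * (q.1 m - y m))
      ((I * (q.1 m - y m) / japaneseBracket q.2) • ∑ k, q.2 k • dζ[k] +
        (I * japaneseBracket q.2) • dz[m]) q := by
  refine ((((hasFDerivAt_japaneseBracket hq).comp q hasFDerivAt_snd).const_mul I).fun_mul
    ((dz[m]).hasFDerivAt.sub_const (y m : ℂ))).congr_fderiv ?_
  ext v <;>
  simp only [Function.comp_apply, comp_apply, coe_fst', coe_snd', proj_apply, smul_comp, add_comp,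
    add_apply, smul_apply, inl_apply, inr_apply, smul_eq_mul, sum_apply, Pi.zero_apply, mul_zero,
    Finset.sum_const_zero, add_zero, zero_add]
  ring

theorem hDzSubZeta_hDzSubZeta_fbiExp {h : ℝ} (hh : h ≠ 0) (y : Fin n → ℝ) (m : Fin n)
    {p : ℂ²ⁿ} (hp : 1 + ∑ k, p.2 k ^ 2 ∈ slitPlane) :
    hDzSubZeta h m (hDzSubZeta h m (fbiExp n h y)) p =
      (h * japaneseBracket p.2 - japaneseBracket p.2 ^ 2 * (p.1 m - y m) ^ 2) *
        fbiExp n h y p := by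
  have hnear : ∀ᶠ q in 𝓝 p, 1 + ∑ k, q.2 k ^ 2 ∈ slitPlane :=
    (by fun_prop : Continuous fun q : ℂ²ⁿ => 1 + ∑ k, q.2 k ^ 2)
      |>.continuousAt.eventually_mem (isOpen_slitPlane.mem_nhds hp)
  have hamp := hasFDerivAt_I_mul_japaneseBracket_mul_sub y m hp
  rw [hDzSubZeta_congr (hnear.mono fun q hq => hDzSubZeta_fbiExp hh y m hq),
    hDzSubZeta_mul h m hamp.differentiableAt (differentiableAt_fbiExp h y hp), hamp.fderiv,
    hDzSubZeta_fbiExp hh y m hp]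
  simp only [div_I, add_apply, smul_apply, comp_apply, coe_snd', sum_apply, proj_apply,
    Pi.zero_apply, smul_eq_mul, mul_zero, Finset.sum_const_zero, coe_fst', Pi.single_eq_same,
    mul_one, zero_add, neg_mul]
  linear_combination (japaneseBracket p.2 ^ 2 * (p.1 m - y m) ^ 2 * fbiExp n h y p -
    h * japaneseBracket p.2 * fbiExp n h y p) * I_sq

theorem sum_hDzSubZeta_hDzSubZeta_fbiExp {h : ℝ} (hh : h ≠ 0) (y : Fin n → ℝ)
    {p : ℂ²ⁿ} (hp : 1 + ∑ k, p.2 k ^ 2 ∈ slitPlane) :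
    ∑ k, hDzSubZeta h k (hDzSubZeta h k (fbiExp n h y)) p =
      (n * h * japaneseBracket p.2 - japaneseBracket p.2 ^ 2 * ∑ k, (p.1 k - y k) ^ 2) *
        fbiExp n h y p := by
  simp only [hDzSubZeta_hDzSubZeta_fbiExp hh y _ hp, ← Finset.sum_mul, Finset.sum_sub_distrib,
    ← Finset.mul_sum, Finset.sum_const, Finset.card_univ, Fintype.card_fin, nsmul_eq_mul]

end

/-- For every `y ∈ ℝⁿ`, the operator `W_j` annihilates the FBI exponential
`(z,ζ) ↦ exp((i/h)(⟨z−y,ζ⟩ + (i/2)⟨ζ⟩(z−y)²))` (away from the branch cut of `⟨ζ⟩`). -/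
theorem Wop_annihilates_fbiExp (n : ℕ) (h : ℝ) (hh : 0 < h) (y : Fin n → ℝ)
    (j : Fin n) (p : (Fin n → ℂ) × (Fin n → ℂ))
    (hbranch : ¬((1 + ∑ k, (p.2 k) ^ 2).im = 0 ∧ (1 + ∑ k, (p.2 k) ^ 2).re ≤ 0)) :
    Wop n h j (fbiExp n h y) p = 0 := by
  have hp : 1 + ∑ k, p.2 k ^ 2 ∈ slitPlane := by
    rw [mem_slitPlane_iff, ← not_le]
    tauto
  have hB := japaneseBracket_ne_zero hp
  have hh' : (h : ℂ) ≠ 0 := ofReal_ne_zero.mpr hh.ne'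
  rw [Wop_eq, hDzSubZeta_fbiExp hh.ne' y j hp, sum_hDzSubZeta_hDzSubZeta_fbiExp hh.ne' y hp,
    fderiv_fbiExp_zeta h y hp]
  field_simp
  linear_combination
    -fbiExp n h y p * p.2 j * japaneseBracket p.2 * (∑ k, (p.1 k - y k) ^ 2) * I_sq

end
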